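/- Let A, B be bounded selfadjoint operators on a complex Hilbert space H with B indefinite, and assume I_≥(A,B) = [λ₋, λ₊] with λ₋ ≤ λ₊. If I_>(A,B) is nonempty, then λ₋ < λ₊ and I_>(A,B) equals the open interval (λ₋, λ₊). -/

import Mathlib

open scoped InnerProductSpace

noncomputable section

variable {H : Type*} [NormedAddCommGroup H] [InnerProductSpace ℂ H] [CompleteSpace H]

/-- The (real) quadratic form associated to an operator. -/
def qf (T : H →L[ℂ] H) (x : H) : ℝ := (⟪T x, x⟫_ℂ).re

/-- Positive semidefinite operator. -/
def PosSemidef (T : H →L[ℂ] H) : Prop := ∀ x, 0 ≤ qf T x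

/-- Positive definite operator (uniformly positive). -/
def PosDef (T : H →L[ℂ] H) : Prop := ∃ α > 0, ∀ x, α * ‖x‖ ^ 2 ≤ qf T x

/-- The set of parameters where the pencil `A + ρ B` is positive semidefinite. -/
def Ige (A B : H →L[ℂ] H) : Set ℝ := {ρ | PosSemidef (A + (ρ : ℂ) • B)}

/-- The set of parameters where the pencil `A + ρ B` is positive definite. -/
def Igt (A B : H →L[ℂ] H) : Set ℝ := {ρ | PosDef (A + (ρ : ℂ) • B)}

/-- An operator is indefinite if its quadratic form takes both signs. -/
def Indefinite (T : H →L[ℂ] H) : Prop := (∃ x, 0 < qf T x) ∧ (∃ x, qf T x < 0)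

/-! The quadratic form of `A + ρ B` is affine in `ρ`. Since `|⟪B x, x⟫| ≤ ‖B‖ ‖x‖²`, uniform
positivity at `ρ` survives small perturbations of `ρ`, so `I_>` lies in the interior `(λ₋, λ₊)` of
`I_≥`. Conversely, a convex combination of a semidefinite and a definite member of the pencil that
gives positive weight to the definite one is definite; joining a point of `I_>` to the endpoints
`λ₋` and `λ₊` therefore fills `(λ₋, λ₊)`. -/

section

omit [CompleteSpace H]

lemma qf_add_ofReal_smul (A B : H →L[ℂ] H) (ρ : ℝ) (x : H) :
    qf (A + (ρ : ℂ) • B) x = qf A x + ρ * qf B x := by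
  simp only [qf, add_apply, smul_apply, inner_add_left,
    inner_smul_left, Complex.add_re, Complex.conj_ofReal, Complex.re_ofReal_mul]

lemma abs_qf_le (T : H →L[ℂ] H) (x : H) : |qf T x| ≤ ‖T‖ * ‖x‖ ^ 2 :=
  calc |qf T x| ≤ ‖⟪T x, x⟫_ℂ‖ := Complex.abs_re_le_norm _
    _ ≤ ‖T x‖ * ‖x‖ := norm_inner_le_norm _ _
    _ ≤ ‖T‖ * ‖x‖ * ‖x‖ := by gcongr; exact T.le_opNorm x
    _ = ‖T‖ * ‖x‖ ^ 2 := by ring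

lemma Igt_subset_interior_Ige (A B : H →L[ℂ] H) : Igt A B ⊆ interior (Ige A B) := by
  rintro ρ ⟨α, hα, hρ⟩
  refine mem_interior_iff_mem_nhds.2 (Metric.mem_nhds_iff.2 ⟨α / (‖B‖ + 1), by positivity, ?_⟩)
  intro σ hσball x
  have hσ : |σ - ρ| * ‖B‖ ≤ α := by
    rw [Metric.mem_ball, Real.dist_eq, lt_div_iff₀ (by positivity)] at hσball
    nlinarith [abs_nonneg (σ - ρ)]
  have hperturb : -(|σ - ρ| * (‖B‖ * ‖x‖ ^ 2)) ≤ (σ - ρ) * qf B x := by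
    refine neg_le_of_abs_le ?_
    rw [abs_mul]
    gcongr
    exact abs_qf_le B x
  have hpos := hρ x
  rw [qf_add_ofReal_smul] at hpos ⊢
  nlinarith [mul_le_mul_of_nonneg_right hσ (sq_nonneg ‖x‖)]

lemma mem_Igt_of_mem_segment {A B : H →L[ℂ] H} {a b ρ : ℝ} (ha : a ∈ Ige A B) (hb : b ∈ Igt A B)
    (hρ : ρ ∈ segment ℝ b a) (hρa : ρ ≠ a) : ρ ∈ Igt A B := by
  obtain ⟨α, hα, hbα⟩ := hb
  obtain ⟨s, t, hs, ht, hst, rfl⟩ := hρ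
  have hs : 0 < s := hs.lt_of_ne fun h => hρa (by simp [← h, show t = 1 by linarith])
  refine ⟨s * α, by positivity, fun x => ?_⟩
  have hcombo : qf (A + ((s • b + t • a : ℝ) : ℂ) • B) x
      = s * qf (A + (b : ℂ) • B) x + t * qf (A + (a : ℂ) • B) x := by
    simp only [qf_add_ofReal_smul, smul_eq_mul]
    linear_combination (qf A x) * hst.symm
  rw [hcombo, mul_assoc]
  nlinarith [mul_le_mul_of_nonneg_left (hbα x) hs.le, mul_nonneg ht (ha x)]

end

theorem stmt14_general (A B : H →L[ℂ] H)
    (lm lp : ℝ) (hI : Ige A B = Set.Icc lm lp)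
    (hne : (Igt A B).Nonempty) :
    lm < lp ∧ Igt A B = Set.Ioo lm lp := by
  obtain ⟨ρ₀, hρ₀⟩ := hne
  have hIgt : Igt A B ⊆ Set.Ioo lm lp := by
    simpa only [hI, interior_Icc] using Igt_subset_interior_Ige A B
  have hlt : lm < lp := (hIgt hρ₀).1.trans (hIgt hρ₀).2
  have hlm : lm ∈ Ige A B := hI ▸ Set.left_mem_Icc.2 hlt.le
  have hlp : lp ∈ Ige A B := hI ▸ Set.right_mem_Icc.2 hlt.le
  refine ⟨hlt, hIgt.antisymm fun ρ ⟨hlmρ, hρlp⟩ => ?_⟩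
  rcases le_total ρ ρ₀ with h | h
  · refine mem_Igt_of_mem_segment hlm hρ₀ ?_ hlmρ.ne'
    exact segment_eq_uIcc ρ₀ lm ▸ Set.mem_uIcc.2 (Or.inr ⟨hlmρ.le, h⟩)
  · refine mem_Igt_of_mem_segment hlp hρ₀ ?_ hρlp.ne
    exact segment_eq_uIcc ρ₀ lp ▸ Set.mem_uIcc.2 (Or.inl ⟨h, hρlp.le⟩)

theorem stmt14 (A B : H →L[ℂ] H) (hA : IsSelfAdjoint A) (hB : IsSelfAdjoint B)
    (hBind : Indefinite B)
    (lm lp : ℝ) (hle : lm ≤ lp) (hI : Ige A B = Set.Icc lm lp)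
    (hne : (Igt A B).Nonempty) :
    lm < lp ∧ Igt A B = Set.Ioo lm lp :=
  stmt14_general A B lm lp hI hne
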